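/- Let $M$ denote the Hardy--Littlewood maximal operator and for $k \geq 1$ let $M^k$ be its $k$-th iterate. Then for all $\lambda > 0$ and $f$, $|\{x\in\mathbb{R}^n : M^k f(x) > \lambda\}| \lesssim \int_{\mathbb{R}^n} \frac{|f(x)|}{\lambda}\log^{k-1}\left(e + \frac{|f(x)|}{\lambda}\right)dx$, with implicit constant depending only on $n$ and $k$. -/

import Mathlib

open MeasureTheory Set ENNReal Filter

structure Cube (n : ℕ) where
  corner : Fin n → ℝ
  side : ℝ
  side_pos : 0 < side

namespace Cube
def carrier {n : ℕ} (Q : Cube n) : Set (Fin n → ℝ) :=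
  {x | ∀ i, Q.corner i ≤ x i ∧ x i < Q.corner i + Q.side}
noncomputable def nine {n : ℕ} (Q : Cube n) : Cube n :=
  ⟨fun i => Q.corner i - 4 * Q.side, 9 * Q.side, by have := Q.side_pos; linarith⟩
end Cube

/-- Hardy–Littlewood maximal operator over cubes. -/
noncomputable def maximal {n : ℕ} (w : (Fin n → ℝ) → ℝ≥0∞) (x : Fin n → ℝ) : ℝ≥0∞ :=
  ⨆ (Q : Cube n) (_ : x ∈ Q.carrier), (∫⁻ y in Q.carrier, w y) / volume Q.carrier

/-- Fujii–Wilson `A_∞` constant. -/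
noncomputable def AinfConst {n : ℕ} (w : (Fin n → ℝ) → ℝ≥0∞) : ℝ≥0∞ :=
  ⨆ Q : Cube n, (∫⁻ x in Q.carrier, maximal (Q.carrier.indicator w) x) / ∫⁻ x in Q.carrier, w x

/-- Muckenhoupt `A_p` constant, `1 < p < ∞`. -/
noncomputable def ApConst {n : ℕ} (p : ℝ) (w : (Fin n → ℝ) → ℝ≥0∞) : ℝ≥0∞ :=
  ⨆ Q : Cube n, ((∫⁻ x in Q.carrier, w x) / volume Q.carrier) *
    ((∫⁻ x in Q.carrier, w x ^ (1 - p / (p - 1))) / volume Q.carrier) ^ (p - 1)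

section Aux
open Metric

namespace Cube

variable {n : ℕ} (Q : Cube n)

lemma carrier_eq_pi : Q.carrier = Set.pi univ (fun i => Ico (Q.corner i) (Q.corner i + Q.side)) := by
  ext x; simp [carrier, Set.mem_pi, Set.mem_Ico]

lemma measurableSet_carrier : MeasurableSet Q.carrier := by
  rw [carrier_eq_pi]
  exact MeasurableSet.univ_pi fun i => measurableSet_Ico

lemma volume_carrier : volume Q.carrier = ENNReal.ofReal Q.side ^ n := by
  rw [carrier_eq_pi, volume_pi_pi]
  simp [Real.volume_Ico]

lemma volume_carrier_ne_zero : volume Q.carrier ≠ 0 := by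
  rw [volume_carrier]
  exact pow_ne_zero _ (by simp [ENNReal.ofReal_eq_zero, not_le, Q.side_pos])

lemma volume_carrier_ne_top : volume Q.carrier ≠ ∞ := by
  rw [volume_carrier]; exact pow_ne_top ofReal_ne_top

noncomputable def center : Fin n → ℝ := fun i => Q.corner i + Q.side / 2

lemma carrier_subset_closedBall : Q.carrier ⊆ closedBall Q.center (Q.side / 2) := by
  intro x hx
  rw [mem_closedBall, dist_pi_le_iff (by have := Q.side_pos; linarith)]
  intro i
  have h := hx i
  rw [Real.dist_eq, abs_le]
  constructor <;> simp only [center] <;> [linarith [h.1]; linarith [h.2]]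

lemma closedBall_subset_nine : closedBall Q.center (4 * (Q.side / 2)) ⊆ Q.nine.carrier := by
  intro x hx
  rw [mem_closedBall] at hx
  intro i
  have h := (dist_le_pi_dist x Q.center i).trans hx
  rw [Real.dist_eq, abs_le] at h
  have hs := Q.side_pos
  simp only [nine, center] at *
  constructor <;> linarith [h.1, h.2]

lemma volume_nine : volume Q.nine.carrier = 9 ^ n * volume Q.carrier := by
  rw [volume_carrier, volume_carrier]
  have hs := Q.side_pos
  have : ENNReal.ofReal (Q.nine.side) = 9 * ENNReal.ofReal Q.side := by
    simp only [nine]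
    rw [ENNReal.ofReal_mul (by norm_num)]
    norm_num
  simp only [nine] at this ⊢
  rw [this, mul_pow]

end Cube

variable {n : ℕ} {w : (Fin n → ℝ) → ℝ≥0∞} {x : Fin n → ℝ}

lemma le_maximal {Q : Cube n} (hx : x ∈ Q.carrier) :
    (∫⁻ y in Q.carrier, w y) / volume Q.carrier ≤ maximal w x :=
  le_iSup₂ (f := fun (Q : Cube n) (_ : x ∈ Q.carrier) => (∫⁻ y in Q.carrier, w y) / volume Q.carrier) Q hx

lemma exists_cube_of_lt_maximal {c : ℝ≥0∞} (h : c < maximal w x) :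
    ∃ Q : Cube n, x ∈ Q.carrier ∧ c < (∫⁻ y in Q.carrier, w y) / volume Q.carrier := by
  rw [maximal, lt_iSup_iff] at h
  obtain ⟨Q, hQ⟩ := h
  rw [lt_iSup_iff] at hQ
  obtain ⟨hx, h⟩ := hQ
  exact ⟨Q, hx, h⟩

lemma exists_cube_mul_lt {c : ℝ≥0∞} (h : c < maximal w x) :
    ∃ Q : Cube n, x ∈ Q.carrier ∧ c * volume Q.carrier < ∫⁻ y in Q.carrier, w y := by
  obtain ⟨Q, hx, h⟩ := exists_cube_of_lt_maximal h
  refine ⟨Q, hx, ?_⟩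
  rwa [ENNReal.lt_div_iff_mul_lt (Or.inl Q.volume_carrier_ne_zero)
    (Or.inl Q.volume_carrier_ne_top)] at h

end Aux

section Meas
open Metric
variable {n : ℕ}

lemma isOpen_maximal_gt (w : (Fin n → ℝ) → ℝ≥0∞) (c : ℝ≥0∞) :
    IsOpen {x | c < maximal w x} := by
  rw [Metric.isOpen_iff]
  intro x hx
  have hc : c ≠ ∞ := fun h => not_top_lt (show (⊤:ℝ≥0∞) < _ from h ▸ hx)
  obtain ⟨Q, hxQ, hQ⟩ := exists_cube_mul_lt hx
  set I := ∫⁻ y in Q.carrier, w y with hI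
  have key : ∃ ε : ℝ, 0 < ε ∧ c * ENNReal.ofReal (Q.side + 2 * ε) ^ n < I := by
    by_cases htop : I = ∞
    · exact ⟨1, one_pos, htop ▸ ENNReal.mul_lt_top hc.lt_top (ENNReal.pow_lt_top ENNReal.ofReal_lt_top)⟩
    · have h1 : c * ENNReal.ofReal Q.side ^ n < I := by rwa [Q.volume_carrier] at hQ
      have cont : Filter.Tendsto (fun ε : ℝ => c * ENNReal.ofReal (Q.side + 2 * ε) ^ n)
          (nhds 0) (nhds (c * ENNReal.ofReal Q.side ^ n)) := by
        have : Filter.Tendsto (fun ε : ℝ => ENNReal.ofReal (Q.side + 2 * ε) ^ n)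
            (nhds 0) (nhds (ENNReal.ofReal Q.side ^ n)) := by
          have h2 : Filter.Tendsto (fun ε : ℝ => Q.side + 2 * ε) (nhds 0) (nhds Q.side) := by
            have : Continuous (fun ε : ℝ => Q.side + 2 * ε) := by continuity
            simpa using this.tendsto 0
          exact ((ENNReal.continuous_pow n).tendsto _).comp
            ((ENNReal.continuous_ofReal.tendsto _).comp h2)
        exact ENNReal.Tendsto.const_mul this (Or.inr hc)
      have := (cont.eventually_lt_const h1)
      rcases Metric.eventually_nhds_iff.1 this with ⟨δ, hδ, hball⟩
      refine ⟨δ / 2, half_pos hδ, hball ?_⟩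
      rw [Real.dist_eq, sub_zero, abs_of_pos (half_pos hδ)]
      exact half_lt_self hδ
  obtain ⟨ε, hε, hlt⟩ := key
  refine ⟨ε, hε, fun y hy => ?_⟩
  set Q' : Cube n := ⟨fun i => Q.corner i - ε, Q.side + 2 * ε, by have := Q.side_pos; linarith⟩
  have hyQ' : y ∈ Q'.carrier := by
    intro i
    have hd : |y i - x i| < ε := lt_of_le_of_lt (by simpa [Real.dist_eq] using dist_le_pi_dist y x i) hy
    rw [abs_lt] at hd
    have h1 := (hxQ i).1
    have h2 := (hxQ i).2
    constructor <;> simp only [Q'] <;> linarith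
  have hsub : Q.carrier ⊆ Q'.carrier := by
    intro z hz i
    have h1 := (hz i).1
    have h2 := (hz i).2
    constructor <;> simp only [Q'] <;> linarith
  have hIle : I ≤ ∫⁻ y in Q'.carrier, w y := lintegral_mono_set hsub
  have hvol : volume Q'.carrier = ENNReal.ofReal (Q.side + 2 * ε) ^ n := Q'.volume_carrier
  have : c < (∫⁻ y in Q'.carrier, w y) / volume Q'.carrier := by
    rw [ENNReal.lt_div_iff_mul_lt (Or.inl Q'.volume_carrier_ne_zero) (Or.inl Q'.volume_carrier_ne_top), hvol]
    exact lt_of_lt_of_le hlt hIle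
  exact lt_of_lt_of_le this (le_maximal hyQ')

lemma measurable_maximal (w : (Fin n → ℝ) → ℝ≥0∞) : Measurable (maximal w) := by
  have : LowerSemicontinuous (maximal w) := by
    rw [lowerSemicontinuous_iff_isOpen_preimage]
    intro y
    exact isOpen_maximal_gt w y
  exact this.measurable

end Meas

section WT
open Metric
variable {n : ℕ}

lemma weak11 (w : (Fin n → ℝ) → ℝ≥0∞) {lam : ℝ≥0∞} (h0 : lam ≠ 0) :
    volume {x | lam < maximal w x} ≤ 9 ^ n / lam * ∫⁻ y, w y := by
  by_cases htop : lam = ∞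
  · have : {x : Fin n → ℝ | lam < maximal w x} = ∅ := by
      ext x; simp [htop, not_top_lt]
    simp [this]
  by_cases hI : (∫⁻ y, w y) = ∞
  · rw [hI, ENNReal.mul_top]
    · exact le_top
    · simp only [ne_eq, ENNReal.div_eq_zero_iff, not_or]
      exact ⟨pow_ne_zero _ (by norm_num), htop⟩
  by_cases hn : n = 0
  · subst hn
    rcases eq_empty_or_nonempty {x : Fin 0 → ℝ | lam < maximal w x} with h | ⟨x, hx⟩
    · simp [h]
    · obtain ⟨Q, -, hQ⟩ := exists_cube_mul_lt hx
      have hvol : volume Q.carrier = 1 := by rw [Q.volume_carrier, pow_zero]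
      have hlam : lam ≤ ∫⁻ y, w y := by
        rw [hvol, mul_one] at hQ
        exact hQ.le.trans (setLIntegral_le_lintegral _ _)
      have huniv : volume (univ : Set (Fin 0 → ℝ)) = 1 := by
        rw [← Set.pi_univ univ, volume_pi_pi]
        simp
      calc volume {x : Fin 0 → ℝ | lam < maximal w x} ≤ volume univ := measure_mono (subset_univ _)
        _ = 1 := huniv
        _ ≤ 9 ^ 0 / lam * ∫⁻ y, w y := by
            have h9 : (9:ℝ≥0∞) ^ 0 / lam * ∫⁻ y, w y = (∫⁻ y, w y) / lam := by
              rw [pow_zero, div_eq_mul_inv, div_eq_mul_inv, one_mul, mul_comm]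
            rw [h9]
            exact (ENNReal.le_div_iff_mul_le (Or.inl h0) (Or.inl htop)).2 (by rwa [one_mul])
  · set E := {x : Fin n → ℝ | lam < maximal w x} with hE
    set I := ∫⁻ y, w y with hIdef
    have hchoice : ∀ x : E, ∃ Q : Cube n, (x : Fin n → ℝ) ∈ Q.carrier ∧
        lam * volume Q.carrier < ∫⁻ y in Q.carrier, w y := fun x => exists_cube_mul_lt x.2
    choose Q hmem hint using hchoice
    have hIQ : ∀ a : E, ∫⁻ y in (Q a).carrier, w y ≤ I := fun a => setLIntegral_le_lintegral _ _
    have hdivtop : I / lam ≠ ∞ := (ENNReal.div_lt_top hI h0).ne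
    set R : ℝ := max 1 ((I / lam).toReal) with hR
    have hside : ∀ a : E, (Q a).side ≤ R := by
      intro a
      have h1 : ENNReal.ofReal ((Q a).side ^ n) ≤ I / lam := by
        rw [ENNReal.ofReal_pow (Q a).side_pos.le, ← (Q a).volume_carrier]
        exact (ENNReal.le_div_iff_mul_le (Or.inl h0) (Or.inl htop)).2
          (by rw [mul_comm]; exact (hint a).le.trans (hIQ a))
      have h2 : (Q a).side ^ n ≤ (I / lam).toReal := by
        calc (Q a).side ^ n = (ENNReal.ofReal ((Q a).side ^ n)).toReal :=
              (ENNReal.toReal_ofReal (pow_nonneg (Q a).side_pos.le n)).symm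
          _ ≤ (I / lam).toReal := ENNReal.toReal_mono hdivtop h1
      by_cases h : (Q a).side ≤ 1
      · exact h.trans (le_max_left _ _)
      · push_neg at h
        exact le_trans (le_self_pow₀ h.le hn) (h2.trans (le_max_right _ _))
    obtain ⟨u, -, hdisj, hcover⟩ :=
      Vitali.exists_disjoint_subfamily_covering_enlargement_closedBall (univ : Set E)
        (fun a => (Q a).center) (fun a => (Q a).side / 2) R
        (fun a _ => by linarith [hside a, (Q a).side_pos]) 4 (by norm_num)
    have hucnt : u.Countable := hdisj.countable_of_nonempty_interior (fun a _ => by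
      refine ⟨(Q a).center, ?_⟩
      have : Metric.ball (Q a).center ((Q a).side / 2) ⊆
          interior (Metric.closedBall (Q a).center ((Q a).side / 2)) :=
        ball_subset_interior_closedBall
      exact this (mem_ball_self (by linarith [(Q a).side_pos])))
    have hcov2 : E ⊆ ⋃ b ∈ u, (Q b).nine.carrier := by
      intro x hx
      obtain ⟨b, hb, hsub⟩ := hcover ⟨x, hx⟩ (mem_univ _)
      refine mem_biUnion hb ?_
      have hx1 : x ∈ Metric.closedBall ((Q ⟨x, hx⟩).center) ((Q ⟨x, hx⟩).side / 2) :=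
        (Q ⟨x, hx⟩).carrier_subset_closedBall (hmem ⟨x, hx⟩)
      exact (Q b).closedBall_subset_nine (hsub hx1)
    have hdisj' : u.PairwiseDisjoint fun b => (Q b).carrier :=
      hdisj.mono fun b => (Q b).carrier_subset_closedBall
    calc volume E ≤ volume (⋃ b ∈ u, (Q b).nine.carrier) := measure_mono hcov2
      _ ≤ ∑' b : u, volume (Q b).nine.carrier := measure_biUnion_le volume hucnt _
      _ = 9 ^ n * ∑' b : u, volume (Q b).carrier := by
          simp_rw [Cube.volume_nine]; rw [ENNReal.tsum_mul_left]
      _ ≤ 9 ^ n * (I / lam) := by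
          gcongr
          rw [ENNReal.le_div_iff_mul_le (Or.inl h0) (Or.inl htop), ← ENNReal.tsum_mul_right]
          calc ∑' b : u, volume (Q b).carrier * lam
              ≤ ∑' b : u, ∫⁻ y in (Q b).carrier, w y :=
                ENNReal.tsum_le_tsum fun b => by rw [mul_comm]; exact (hint b).le
            _ = ∫⁻ y in ⋃ b ∈ u, (Q b).carrier, w y :=
                (lintegral_biUnion hucnt (fun b _ => (Q b).measurableSet_carrier) hdisj' w).symm
            _ ≤ I := setLIntegral_le_lintegral _ _
      _ = 9 ^ n / lam * I := by
          rw [div_eq_mul_inv, div_eq_mul_inv, mul_assoc]; ring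

end WT

section WT2
variable {n : ℕ}

lemma weak11_restricted (w : (Fin n → ℝ) → ℝ≥0∞) {lam : ℝ} (hlam : 0 < lam) :
    volume {x | ENNReal.ofReal lam < maximal w x} ≤
      2 * 9 ^ n / ENNReal.ofReal lam *
        ∫⁻ y, (if ENNReal.ofReal (lam / 2) < w y then w y else 0) := by
  set a := ENNReal.ofReal (lam / 2) with ha
  set w' := fun y => if a < w y then w y else 0 with hw'
  have ha0 : a ≠ 0 := by
    simp [ha, ENNReal.ofReal_eq_zero, not_le, half_pos hlam]
  have hatop : a ≠ ∞ := ENNReal.ofReal_ne_top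
  have hsub : {x : Fin n → ℝ | ENNReal.ofReal lam < maximal w x} ⊆
      {x | a < maximal w' x} := by
    intro x hx
    obtain ⟨Q, hm, hQ⟩ := exists_cube_mul_lt hx
    have hwle : ∀ y, w y ≤ a + w' y := by
      intro y
      by_cases h : a < w y
      · simp only [hw', if_pos h]; exact le_add_self
      · push_neg at h
        exact h.trans (le_add_right le_rfl)
    have hint : ∫⁻ y in Q.carrier, w y ≤ a * volume Q.carrier + ∫⁻ y in Q.carrier, w' y := by
      calc ∫⁻ y in Q.carrier, w y ≤ ∫⁻ y in Q.carrier, (a + w' y) := lintegral_mono hwle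
        _ = a * volume Q.carrier + ∫⁻ y in Q.carrier, w' y := by
            rw [lintegral_add_left measurable_const, setLIntegral_const]
    have hlamsplit : ENNReal.ofReal lam = a + a := by
      rw [ha, ← ENNReal.ofReal_add (by linarith) (by linarith)]
      norm_num
    have hkey : a * volume Q.carrier < ∫⁻ y in Q.carrier, w' y := by
      have h2 : a * volume Q.carrier + a * volume Q.carrier <
          a * volume Q.carrier + ∫⁻ y in Q.carrier, w' y := by
        calc a * volume Q.carrier + a * volume Q.carrier
            = ENNReal.ofReal lam * volume Q.carrier := by rw [hlamsplit, add_mul]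
          _ < ∫⁻ y in Q.carrier, w y := hQ
          _ ≤ _ := hint
      exact lt_of_add_lt_add_left h2
    have : a < (∫⁻ y in Q.carrier, w' y) / volume Q.carrier := by
      rw [ENNReal.lt_div_iff_mul_lt (Or.inl Q.volume_carrier_ne_zero)
        (Or.inl Q.volume_carrier_ne_top)]
      exact hkey
    exact this.trans_le (le_maximal hm)
  have hcoef : (9:ℝ≥0∞) ^ n / a = 2 * 9 ^ n / ENNReal.ofReal lam := by
    have : ENNReal.ofReal lam = 2 * a := by
      rw [ha, ← ENNReal.ofReal_ofNat, ← ENNReal.ofReal_mul (by norm_num)]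
      ring_nf
    rw [this, ← ENNReal.mul_div_mul_left (9 ^ n) a (two_ne_zero) (ENNReal.ofNat_ne_top)]
  calc volume {x : Fin n → ℝ | ENNReal.ofReal lam < maximal w x}
      ≤ volume {x | a < maximal w' x} := measure_mono hsub
    _ ≤ 9 ^ n / a * ∫⁻ y, w' y := weak11 w' ha0
    _ = 2 * 9 ^ n / ENNReal.ofReal lam * ∫⁻ y, w' y := by rw [hcoef]

end WT2

section Helpers

lemma pointwise_layer {G : ℝ≥0∞} {c : ℝ} (hc : 0 < c) :
    (if ENNReal.ofReal c < G then G else 0) ≤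
      (if ENNReal.ofReal c < G then ENNReal.ofReal c else 0)
        + ∫⁻ t in Set.Ioi c, (if ENNReal.ofReal t < G then (1:ℝ≥0∞) else 0) := by
  by_cases h : ENNReal.ofReal c < G
  · rw [if_pos h, if_pos h]
    by_cases hG : G = ∞
    · have : ∫⁻ t in Set.Ioi c, (if ENNReal.ofReal t < G then (1:ℝ≥0∞) else 0) = ∞ := by
        have : ∀ t, (if ENNReal.ofReal t < G then (1:ℝ≥0∞) else 0) = 1 := fun t => by
          rw [if_pos (hG ▸ ENNReal.ofReal_lt_top)]
        simp_rw [this, setLIntegral_one, Real.volume_Ioi]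
      rw [this]
      simp
    · set r := G.toReal with hr
      have hGr : G = ENNReal.ofReal r := (ENNReal.ofReal_toReal hG).symm
      have hcr : c < r := by
        have := (ENNReal.toReal_lt_toReal ENNReal.ofReal_ne_top hG).2 h
        rwa [ENNReal.toReal_ofReal hc.le] at this
      have hrpos : 0 < r := hc.trans hcr
      have key : ENNReal.ofReal (r - c) ≤
          ∫⁻ t in Set.Ioi c, (if ENNReal.ofReal t < G then (1:ℝ≥0∞) else 0) := by
        have h1 : ∫⁻ t in Set.Ioo c r, (if ENNReal.ofReal t < G then (1:ℝ≥0∞) else 0)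
            = ENNReal.ofReal (r - c) := by
          rw [setLIntegral_congr_fun measurableSet_Ioo
            ((fun t ht => by
              rw [if_pos (hGr ▸ (ENNReal.ofReal_lt_ofReal_iff hrpos).2 ht.2)])),
            setLIntegral_one, Real.volume_Ioo]
        rw [← h1]
        exact lintegral_mono_set Set.Ioo_subset_Ioi_self
      calc G = ENNReal.ofReal c + ENNReal.ofReal (r - c) := by
            rw [← ENNReal.ofReal_add hc.le (by linarith), hGr]
            congr 1; ring
        _ ≤ _ := by gcongr
  · rw [if_neg h]
    exact zero_le

lemma ite_lintegral_const {α : Type*} [MeasurableSpace α] (μ : MeasureTheory.Measure α)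
    {G : α → ℝ≥0∞} (hG : Measurable G) (c d : ℝ≥0∞) :
    ∫⁻ x, (if c < G x then d else 0) ∂μ = d * μ {x | c < G x} := by
  have : (fun x => if c < G x then d else 0) =
      Set.indicator {x | c < G x} (fun _ => d) := by
    funext x
    rw [Set.indicator_apply]
    simp only [Set.mem_setOf_eq]
  rw [this, lintegral_indicator_const (measurableSet_lt measurable_const hG)]

end Helpers

section CalcHelper

lemma one_le_log_exp_add {s : ℝ} (hs : 0 ≤ s) : 1 ≤ Real.log (Real.exp 1 + s) := by
  calc (1:ℝ) = Real.log (Real.exp 1) := (Real.log_exp 1).symm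
    _ ≤ Real.log (Real.exp 1 + s) := Real.log_le_log (Real.exp_pos 1) (by linarith)

lemma calc_integral {v c : ℝ} (hc : 0 < c) (hv : 0 ≤ v) (m K : ℕ) :
    (∫⁻ t in Set.Ioi c, ENNReal.ofReal
        (if t / 2 ^ K < v then (v / t) * Real.log (Real.exp 1 + v / t) ^ m else 0))
      ≤ ENNReal.ofReal (if c / 2 ^ K < v then
          ((K : ℝ) * Real.log 2 + 1) * (v * Real.log (Real.exp 1 + v / c) ^ (m + 1)) else 0) := by
  have h2K : (0:ℝ) < 2 ^ K := by positivity
  by_cases hcv : c / 2 ^ K < v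
  swap
  · push_neg at hcv
    have hzero : ∀ t ∈ Set.Ioi c, ENNReal.ofReal
        (if t / 2 ^ K < v then (v / t) * Real.log (Real.exp 1 + v / t) ^ m else 0) = 0 := by
      intro t ht
      rw [if_neg, ENNReal.ofReal_zero]
      push_neg
      calc v ≤ c / 2 ^ K := hcv
        _ ≤ t / 2 ^ K := by gcongr; exact (Set.mem_Ioi.1 ht).le
    rw [setLIntegral_congr_fun measurableSet_Ioi hzero,
      lintegral_zero, if_neg (not_lt.2 hcv), ENNReal.ofReal_zero]
  · have hvpos : 0 < v := lt_of_le_of_lt (by positivity) hcv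
    set b := 2 ^ K * v with hb
    have hcb : c < b := by
      have := (div_lt_iff₀ h2K).1 hcv
      rwa [mul_comm] at this
    set L := Real.log (Real.exp 1 + v / c) with hL
    have hL1 : 1 ≤ L := one_le_log_exp_add (by positivity)
    have hL0 : 0 ≤ L := le_trans zero_le_one hL1
    -- pointwise bound
    have hpt : ∀ t ∈ Set.Ioi c, ENNReal.ofReal
        (if t / 2 ^ K < v then (v / t) * Real.log (Real.exp 1 + v / t) ^ m else 0)
        ≤ (Set.Ioc c b).indicator (fun t => ENNReal.ofReal ((v * L ^ m) * t⁻¹)) t := by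
      intro t ht
      rw [Set.mem_Ioi] at ht
      have htpos : 0 < t := hc.trans ht
      by_cases h : t / 2 ^ K < v
      · have htb : t ∈ Set.Ioc c b := ⟨ht, by
          have := (div_lt_iff₀ h2K).1 h
          rw [mul_comm] at this
          exact this.le⟩
        rw [Set.indicator_of_mem htb, if_pos h]
        apply ENNReal.ofReal_le_ofReal
        have hvt : v / t ≤ v / c := div_le_div_of_nonneg_left hv hc ht.le
        have hlog : Real.log (Real.exp 1 + v / t) ≤ L :=
          Real.log_le_log (by positivity) (by linarith)
        have hlog0 : 0 ≤ Real.log (Real.exp 1 + v / t) :=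
          le_trans zero_le_one (one_le_log_exp_add (by positivity))
        calc (v / t) * Real.log (Real.exp 1 + v / t) ^ m
            ≤ (v / t) * L ^ m := by
              apply mul_le_mul_of_nonneg_left (pow_le_pow_left₀ hlog0 hlog m) (by positivity)
          _ = (v * L ^ m) * t⁻¹ := by ring
      · rw [if_neg h, ENNReal.ofReal_zero]
        exact zero_le
    calc (∫⁻ t in Set.Ioi c, ENNReal.ofReal
          (if t / 2 ^ K < v then (v / t) * Real.log (Real.exp 1 + v / t) ^ m else 0))
        ≤ ∫⁻ t in Set.Ioi c,
            (Set.Ioc c b).indicator (fun t => ENNReal.ofReal ((v * L ^ m) * t⁻¹)) t :=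
          setLIntegral_mono_ae (Measurable.indicator
            (by measurability) measurableSet_Ioc).aemeasurable
            (Filter.Eventually.of_forall hpt)
      _ = ∫⁻ t in Set.Ioc c b, ENNReal.ofReal ((v * L ^ m) * t⁻¹) := by
          rw [lintegral_indicator measurableSet_Ioc, Measure.restrict_restrict measurableSet_Ioc,
            Set.inter_eq_left.2 (Set.Ioc_subset_Ioi_self)]
      _ = ENNReal.ofReal (∫ t in Set.Ioc c b, (v * L ^ m) * t⁻¹) := by
          rw [MeasureTheory.ofReal_integral_eq_lintegral_ofReal]
          · have hcont : ContinuousOn (fun t : ℝ => (v * L ^ m) * t⁻¹) (Set.Icc c b) := by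
              apply ContinuousOn.mul continuousOn_const
              apply ContinuousOn.inv₀ continuousOn_id
              intro t ht
              exact ne_of_gt (lt_of_lt_of_le hc ht.1)
            exact (hcont.integrableOn_Icc).mono_set Set.Ioc_subset_Icc_self
          · refine (MeasureTheory.ae_restrict_iff' measurableSet_Ioc).2
              (Filter.Eventually.of_forall fun t ht => ?_)
            have : 0 < t := hc.trans ht.1
            positivity
      _ ≤ ENNReal.ofReal (((K : ℝ) * Real.log 2 + 1) * (v * L ^ (m + 1))) := by
          apply ENNReal.ofReal_le_ofReal
          have hint : ∫ t in Set.Ioc c b, (v * L ^ m) * t⁻¹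
              = (v * L ^ m) * (Real.log b - Real.log c) := by
            rw [MeasureTheory.integral_const_mul, ← intervalIntegral.integral_of_le hcb.le,
              integral_inv (by
                rw [Set.uIcc_of_le hcb.le]
                intro hmem
                exact absurd hmem.1 (not_le.2 hc)),
              Real.log_div (by positivity) (ne_of_gt hc)]
          rw [hint]
          have hlogb : Real.log b - Real.log c = (K : ℝ) * Real.log 2 + Real.log (v / c) := by
            rw [hb, Real.log_mul (by positivity) (ne_of_gt hvpos), Real.log_pow,
              Real.log_div (ne_of_gt hvpos) (ne_of_gt hc)]
            ring
          have hlogvc : Real.log (v / c) ≤ L :=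
            Real.log_le_log (by positivity) (by linarith [Real.exp_pos 1])
          have hlog2 : (0:ℝ) ≤ Real.log 2 := Real.log_nonneg (by norm_num)
          have hfinal : Real.log b - Real.log c ≤ ((K : ℝ) * Real.log 2 + 1) * L := by
            rw [hlogb]
            have h1 : (K:ℝ) * Real.log 2 ≤ (K:ℝ) * Real.log 2 * L :=
              le_mul_of_one_le_right (by positivity) hL1
            calc (K:ℝ) * Real.log 2 + Real.log (v / c)
                ≤ (K:ℝ) * Real.log 2 * L + L := by linarith
              _ = ((K : ℝ) * Real.log 2 + 1) * L := by ring
          calc (v * L ^ m) * (Real.log b - Real.log c)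
              ≤ (v * L ^ m) * (((K : ℝ) * Real.log 2 + 1) * L) :=
                mul_le_mul_of_nonneg_left hfinal (by positivity)
            _ = ((K : ℝ) * Real.log 2 + 1) * (v * L ^ (m + 1)) := by rw [pow_succ]; ring
      _ ≤ _ := by rw [if_pos hcv]

end CalcHelper

section RealHelpers

lemma log_two_mul_le {s : ℝ} (hs : 0 ≤ s) :
    Real.log (Real.exp 1 + 2 * s) ≤ 2 * Real.log (Real.exp 1 + s) := by
  have he : (1:ℝ) ≤ Real.exp 1 := by
    have := Real.add_one_le_exp (1:ℝ); linarith
  have h1 : Real.exp 1 + 2 * s ≤ (Real.exp 1 + s) ^ 2 := by nlinarith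
  calc Real.log (Real.exp 1 + 2 * s) ≤ Real.log ((Real.exp 1 + s) ^ 2) :=
        Real.log_le_log (by positivity) h1
    _ = 2 * Real.log (Real.exp 1 + s) := by
        rw [Real.log_pow]; norm_num

lemma pow_log_two_mul_le {s : ℝ} (hs : 0 ≤ s) (j : ℕ) :
    Real.log (Real.exp 1 + 2 * s) ^ j ≤ 2 ^ j * Real.log (Real.exp 1 + s) ^ j := by
  have h0 : 0 ≤ Real.log (Real.exp 1 + 2 * s) :=
    le_trans zero_le_one (one_le_log_exp_add (by linarith))
  calc Real.log (Real.exp 1 + 2 * s) ^ j ≤ (2 * Real.log (Real.exp 1 + s)) ^ j :=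
        pow_le_pow_left₀ h0 (log_two_mul_le hs) j
    _ = 2 ^ j * Real.log (Real.exp 1 + s) ^ j := mul_pow _ _ _

lemma half_div_eq {lam gx : ℝ} (hlam : lam ≠ 0) : gx / (lam / 2) = 2 * (gx / lam) := by
  field_simp

lemma real_T1 {lam gx : ℝ} (hlam : 0 < lam) (hg : 0 ≤ gx) (j : ℕ) :
    lam / 2 * (if lam / 2 / 2 ^ (j + 1) < gx
        then gx / (lam / 2) * Real.log (Real.exp 1 + gx / (lam / 2)) ^ j else 0) / lam
      ≤ 2 ^ j * (if lam / 2 ^ (j + 2) < gx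
        then gx / lam * Real.log (Real.exp 1 + gx / lam) ^ (j + 1) else 0) := by
  have hcond : (lam / 2 / 2 ^ (j + 1) < gx) ↔ (lam / 2 ^ (j + 2) < gx) := by
    rw [div_div, ← pow_succ']
  by_cases h : lam / 2 ^ (j + 2) < gx
  · rw [if_pos (hcond.2 h), if_pos h, half_div_eq hlam.ne']
    set s := gx / lam with hs
    have hs0 : 0 ≤ s := div_nonneg hg hlam.le
    have hL1 : 1 ≤ Real.log (Real.exp 1 + s) := one_le_log_exp_add hs0
    have hL0 : 0 ≤ Real.log (Real.exp 1 + s) := zero_le_one.trans hL1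
    have heq : lam / 2 * (2 * s * Real.log (Real.exp 1 + 2 * s) ^ j) / lam
        = s * Real.log (Real.exp 1 + 2 * s) ^ j := by
      rw [show lam / 2 * (2 * s * Real.log (Real.exp 1 + 2 * s) ^ j)
          = s * Real.log (Real.exp 1 + 2 * s) ^ j * lam by ring,
        mul_div_assoc, div_self hlam.ne', mul_one]
    rw [heq]
    calc s * Real.log (Real.exp 1 + 2 * s) ^ j
        ≤ s * (2 ^ j * Real.log (Real.exp 1 + s) ^ j) :=
          mul_le_mul_of_nonneg_left (pow_log_two_mul_le hs0 j) hs0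
      _ ≤ s * (2 ^ j * Real.log (Real.exp 1 + s) ^ j) * Real.log (Real.exp 1 + s) :=
          le_mul_of_one_le_right (by positivity) hL1
      _ = 2 ^ j * (s * Real.log (Real.exp 1 + s) ^ (j + 1)) := by rw [pow_succ]; ring
  · rw [if_neg (fun hh => h (hcond.1 hh)), if_neg h]
    simp

lemma real_T2 {lam gx : ℝ} (hlam : 0 < lam) (hg : 0 ≤ gx) (j : ℕ) :
    (if lam / 2 / 2 ^ (j + 1) < gx
        then (((j:ℝ) + 1) * Real.log 2 + 1) *
          (gx * Real.log (Real.exp 1 + gx / (lam / 2)) ^ (j + 1)) else 0) / lam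
      ≤ (((j:ℝ) + 1) * Real.log 2 + 1) * 2 ^ (j + 1) *
          (if lam / 2 ^ (j + 2) < gx
            then gx / lam * Real.log (Real.exp 1 + gx / lam) ^ (j + 1) else 0) := by
  have hA : (0:ℝ) ≤ ((j:ℝ) + 1) * Real.log 2 + 1 := by
    have : (0:ℝ) ≤ Real.log 2 := Real.log_nonneg (by norm_num)
    positivity
  have hcond : (lam / 2 / 2 ^ (j + 1) < gx) ↔ (lam / 2 ^ (j + 2) < gx) := by
    rw [div_div, ← pow_succ']
  by_cases h : lam / 2 ^ (j + 2) < gx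
  · rw [if_pos (hcond.2 h), if_pos h, half_div_eq hlam.ne']
    set s := gx / lam with hs
    have hs0 : 0 ≤ s := div_nonneg hg hlam.le
    have heq : (((j:ℝ) + 1) * Real.log 2 + 1) *
        (gx * Real.log (Real.exp 1 + 2 * s) ^ (j + 1)) / lam
        = (((j:ℝ) + 1) * Real.log 2 + 1) * (s * Real.log (Real.exp 1 + 2 * s) ^ (j + 1)) := by
      rw [mul_div_assoc, mul_div_right_comm]
    rw [heq]
    calc (((j:ℝ) + 1) * Real.log 2 + 1) * (s * Real.log (Real.exp 1 + 2 * s) ^ (j + 1))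
        ≤ (((j:ℝ) + 1) * Real.log 2 + 1) *
            (s * (2 ^ (j + 1) * Real.log (Real.exp 1 + s) ^ (j + 1))) := by
          apply mul_le_mul_of_nonneg_left _ hA
          exact mul_le_mul_of_nonneg_left (pow_log_two_mul_le hs0 (j + 1)) hs0
      _ = (((j:ℝ) + 1) * Real.log 2 + 1) * 2 ^ (j + 1) *
            (s * Real.log (Real.exp 1 + s) ^ (j + 1)) := by ring
  · rw [if_neg (fun hh => h (hcond.1 hh)), if_neg h]
    simp

lemma ofReal_inv_mul {lam r : ℝ} (hlam : 0 < lam) :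
    (ENNReal.ofReal lam)⁻¹ * ENNReal.ofReal r = ENNReal.ofReal (r / lam) := by
  rw [ENNReal.ofReal_div_of_pos hlam, div_eq_mul_inv, mul_comm]

end RealHelpers

section Key
variable {n : ℕ}

lemma measurable_maximal_iterate (w : (Fin n → ℝ) → ℝ≥0∞) (k : ℕ) :
    Measurable ((maximal (n := n))^[k + 1] w) := by
  rw [Function.iterate_succ_apply']
  exact measurable_maximal _

lemma key (n k : ℕ) (hk : 1 ≤ k) : ∃ C : ℝ≥0∞, C ≠ ⊤ ∧
    ∀ g : (Fin n → ℝ) → ℝ, Measurable g → (∀ x, 0 ≤ g x) → ∀ lam : ℝ, 0 < lam →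
      volume {x | ENNReal.ofReal lam < (maximal (n := n))^[k] (fun y => ENNReal.ofReal (g y)) x}
        ≤ C * ∫⁻ x, ENNReal.ofReal
            (if lam / 2 ^ k < g x
              then g x / lam * Real.log (Real.exp 1 + g x / lam) ^ (k - 1) else 0) := by
  induction k, hk using Nat.le_induction with
  | base =>
    refine ⟨2 * 9 ^ n, ENNReal.mul_ne_top ENNReal.ofNat_ne_top
      (ENNReal.pow_ne_top ENNReal.ofNat_ne_top), fun g hg hg0 lam hlam => ?_⟩
    rw [Function.iterate_one]
    refine le_trans (weak11_restricted (fun y => ENNReal.ofReal (g y)) hlam) ?_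
    rw [div_eq_mul_inv, mul_assoc]
    refine mul_le_mul_right ?_ _
    have hinv : (ENNReal.ofReal lam)⁻¹ ≠ ⊤ := by
      simp [ENNReal.inv_ne_top, ENNReal.ofReal_eq_zero, not_le, hlam]
    rw [← lintegral_const_mul' _ _ hinv]
    apply lintegral_mono
    intro y
    dsimp only
    by_cases h : lam / 2 < g y
    · rw [if_pos ((ENNReal.ofReal_lt_ofReal_iff_of_nonneg (by linarith)).2 h),
        ofReal_inv_mul hlam, if_pos (by rwa [pow_one])]
      simp
    · rw [if_neg (fun hh => h ((ENNReal.ofReal_lt_ofReal_iff_of_nonneg (by linarith)).1 hh)),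
        mul_zero]
      exact zero_le
  | succ k hk1 ih =>
    obtain ⟨j, rfl⟩ : ∃ j, k = j + 1 := ⟨k - 1, (Nat.succ_pred_eq_of_pos hk1).symm⟩
    obtain ⟨C, hC, hCb⟩ := ih
    simp only [Nat.add_sub_cancel] at hCb ⊢
    set A2R : ℝ := ((j : ℝ) + 1) * Real.log 2 + 1 with hA2R
    have hA2R0 : 0 ≤ A2R := by
      have : (0:ℝ) ≤ Real.log 2 := Real.log_nonneg (by norm_num)
      positivity
    refine ⟨2 * 9 ^ n * (C * (ENNReal.ofReal ((2:ℝ) ^ j) + ENNReal.ofReal (A2R * 2 ^ (j + 1)))),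
      ?_, fun g hg hg0 lam hlam => ?_⟩
    · exact ENNReal.mul_ne_top
        (ENNReal.mul_ne_top ENNReal.ofNat_ne_top (ENNReal.pow_ne_top ENNReal.ofNat_ne_top))
        (ENNReal.mul_ne_top hC
          (ENNReal.add_ne_top.2 ⟨ENNReal.ofReal_ne_top, ENNReal.ofReal_ne_top⟩))
    set c : ℝ := lam / 2 with hcdef
    have hc : 0 < c := half_pos hlam
    have hA1bound := hCb g hg hg0 c hc
    set G := (maximal (n := n))^[j + 1] (fun y => ENNReal.ofReal (g y)) with hGdef
    have hGmeas : Measurable G := measurable_maximal_iterate _ j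
    -- step 1 : restricted weak type for the outer maximal
    have hstep : volume {x | ENNReal.ofReal lam <
          (maximal (n := n))^[j + 1 + 1] (fun y => ENNReal.ofReal (g y)) x}
        ≤ 2 * 9 ^ n / ENNReal.ofReal lam *
            ∫⁻ y, (if ENNReal.ofReal c < G y then G y else 0) := by
      have : (maximal (n := n))^[j + 1 + 1] (fun y => ENNReal.ofReal (g y)) = maximal G := by
        rw [hGdef, Function.iterate_succ_apply']
      rw [this]
      exact weak11_restricted G hlam
    -- layer cake
    set B : (Fin n → ℝ) → ℝ → ℝ≥0∞ := fun y t => if ENNReal.ofReal t < G y then 1 else 0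
      with hBdef
    set A : (Fin n → ℝ) → ℝ≥0∞ :=
      fun y => if ENNReal.ofReal c < G y then ENNReal.ofReal c else 0 with hAdef
    have hAmeas : Measurable A :=
      Measurable.ite (measurableSet_lt measurable_const hGmeas) measurable_const measurable_const
    have hlayer : (∫⁻ y, (if ENNReal.ofReal c < G y then G y else 0))
        ≤ (∫⁻ y, A y) + ∫⁻ y, ∫⁻ t in Set.Ioi c, B y t := by
      calc (∫⁻ y, (if ENNReal.ofReal c < G y then G y else 0))
          ≤ ∫⁻ y, (A y + ∫⁻ t in Set.Ioi c, B y t) :=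
            lintegral_mono fun y => pointwise_layer hc
        _ = _ := lintegral_add_left hAmeas _
    -- T1
    have hT1 : (∫⁻ y, A y) ≤ ENNReal.ofReal c * (C * ∫⁻ x, ENNReal.ofReal
        (if c / 2 ^ (j + 1) < g x
          then g x / c * Real.log (Real.exp 1 + g x / c) ^ j else 0)) := by
      rw [hAdef, ite_lintegral_const volume hGmeas _ _]
      exact mul_le_mul_right hA1bound _
    -- T2
    set F : ℝ → (Fin n → ℝ) → ℝ≥0∞ := fun t x => ENNReal.ofReal
      (if t / 2 ^ (j + 1) < g x
        then g x / t * Real.log (Real.exp 1 + g x / t) ^ j else 0) with hFdef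
    have hFu : Measurable (Function.uncurry F) := by
      apply ENNReal.measurable_ofReal.comp
      apply Measurable.ite
      · exact measurableSet_lt (measurable_fst.div_const _) (hg.comp measurable_snd)
      · exact ((hg.comp measurable_snd).div measurable_fst).mul
          ((Real.measurable_log.comp
            (measurable_const.add ((hg.comp measurable_snd).div measurable_fst))).pow_const j)
      · exact measurable_const
    have hBu : Measurable (Function.uncurry B) := by
      apply Measurable.ite _ measurable_const measurable_const
      exact measurableSet_lt (ENNReal.measurable_ofReal.comp measurable_snd)
        (hGmeas.comp measurable_fst)
    have hT2 : (∫⁻ y, ∫⁻ t in Set.Ioi c, B y t) ≤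
        C * ∫⁻ x, ENNReal.ofReal
          (if c / 2 ^ (j + 1) < g x
            then (((j + 1 : ℕ) : ℝ) * Real.log 2 + 1) *
              (g x * Real.log (Real.exp 1 + g x / c) ^ (j + 1)) else 0) := by
      calc (∫⁻ y, ∫⁻ t in Set.Ioi c, B y t)
          = ∫⁻ t in Set.Ioi c, ∫⁻ y, B y t := lintegral_lintegral_swap hBu.aemeasurable
        _ = ∫⁻ t in Set.Ioi c, volume {y | ENNReal.ofReal t < G y} := by
            congr 1
            funext t
            rw [hBdef, ite_lintegral_const volume hGmeas _ 1, one_mul]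
        _ ≤ ∫⁻ t in Set.Ioi c, C * ∫⁻ x, F t x := by
            refine setLIntegral_mono' measurableSet_Ioi fun t ht => ?_
            exact hCb g hg hg0 t (hc.trans ht)
        _ = C * ∫⁻ t in Set.Ioi c, ∫⁻ x, F t x := lintegral_const_mul' _ _ hC
        _ = C * ∫⁻ x, ∫⁻ t in Set.Ioi c, F t x := by
            rw [lintegral_lintegral_swap hFu.aemeasurable]
        _ ≤ C * ∫⁻ x, ENNReal.ofReal
              (if c / 2 ^ (j + 1) < g x
                then (((j + 1 : ℕ) : ℝ) * Real.log 2 + 1) *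
                  (g x * Real.log (Real.exp 1 + g x / c) ^ (j + 1)) else 0) := by
            refine mul_le_mul_right (lintegral_mono fun x => ?_) _
            exact calc_integral hc (hg0 x) j (j + 1)
    -- assembling
    have hinvne : (ENNReal.ofReal lam)⁻¹ ≠ ⊤ := by
      simp [ENNReal.inv_ne_top, ENNReal.ofReal_eq_zero, not_le, hlam]
    set Jt : ℝ≥0∞ := ∫⁻ x, ENNReal.ofReal
      (if lam / 2 ^ (j + 1 + 1) < g x
        then g x / lam * Real.log (Real.exp 1 + g x / lam) ^ (j + 1) else 0) with hJt
    -- bound 1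
    have hb1 : (ENNReal.ofReal lam)⁻¹ * (ENNReal.ofReal c * (C * ∫⁻ x, ENNReal.ofReal
        (if c / 2 ^ (j + 1) < g x
          then g x / c * Real.log (Real.exp 1 + g x / c) ^ j else 0)))
        ≤ C * (ENNReal.ofReal ((2:ℝ) ^ j) * Jt) := by
      rw [show (ENNReal.ofReal lam)⁻¹ * (ENNReal.ofReal c * (C * ∫⁻ x, ENNReal.ofReal
          (if c / 2 ^ (j + 1) < g x
            then g x / c * Real.log (Real.exp 1 + g x / c) ^ j else 0)))
          = C * ((ENNReal.ofReal lam)⁻¹ * (ENNReal.ofReal c * ∫⁻ x, ENNReal.ofReal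
          (if c / 2 ^ (j + 1) < g x
            then g x / c * Real.log (Real.exp 1 + g x / c) ^ j else 0))) by ring]
      refine mul_le_mul_right ?_ _
      rw [← lintegral_const_mul' _ _ ENNReal.ofReal_ne_top,
        ← lintegral_const_mul' _ _ hinvne, hJt,
        ← lintegral_const_mul' _ _ ENNReal.ofReal_ne_top]
      apply lintegral_mono
      intro x
      dsimp only
      rw [← ENNReal.ofReal_mul hc.le, ofReal_inv_mul hlam, ← ENNReal.ofReal_mul (by positivity)]
      apply ENNReal.ofReal_le_ofReal
      exact real_T1 hlam (hg0 x) j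
    -- bound 2
    have hb2 : (ENNReal.ofReal lam)⁻¹ * (C * ∫⁻ x, ENNReal.ofReal
        (if c / 2 ^ (j + 1) < g x
          then (((j + 1 : ℕ) : ℝ) * Real.log 2 + 1) *
            (g x * Real.log (Real.exp 1 + g x / c) ^ (j + 1)) else 0))
        ≤ C * (ENNReal.ofReal (A2R * 2 ^ (j + 1)) * Jt) := by
      rw [show (ENNReal.ofReal lam)⁻¹ * (C * ∫⁻ x, ENNReal.ofReal
          (if c / 2 ^ (j + 1) < g x
            then (((j + 1 : ℕ) : ℝ) * Real.log 2 + 1) *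
              (g x * Real.log (Real.exp 1 + g x / c) ^ (j + 1)) else 0))
          = C * ((ENNReal.ofReal lam)⁻¹ * ∫⁻ x, ENNReal.ofReal
          (if c / 2 ^ (j + 1) < g x
            then (((j + 1 : ℕ) : ℝ) * Real.log 2 + 1) *
              (g x * Real.log (Real.exp 1 + g x / c) ^ (j + 1)) else 0)) by ring]
      refine mul_le_mul_right ?_ _
      rw [← lintegral_const_mul' _ _ hinvne, hJt,
        ← lintegral_const_mul' _ _ ENNReal.ofReal_ne_top]
      apply lintegral_mono
      intro x
      dsimp only
      rw [ofReal_inv_mul hlam, ← ENNReal.ofReal_mul (by positivity)]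
      apply ENNReal.ofReal_le_ofReal
      have := real_T2 hlam (hg0 x) j
      push_cast
      push_cast at this
      convert this using 3
    -- final chain
    calc volume {x | ENNReal.ofReal lam <
          (maximal (n := n))^[j + 1 + 1] (fun y => ENNReal.ofReal (g y)) x}
        ≤ 2 * 9 ^ n / ENNReal.ofReal lam *
            ∫⁻ y, (if ENNReal.ofReal c < G y then G y else 0) := hstep
      _ ≤ 2 * 9 ^ n / ENNReal.ofReal lam *
            ((∫⁻ y, A y) + ∫⁻ y, ∫⁻ t in Set.Ioi c, B y t) := mul_le_mul_right hlayer _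
      _ ≤ 2 * 9 ^ n / ENNReal.ofReal lam *
            ((ENNReal.ofReal c * (C * ∫⁻ x, ENNReal.ofReal
              (if c / 2 ^ (j + 1) < g x
                then g x / c * Real.log (Real.exp 1 + g x / c) ^ j else 0)))
              + C * ∫⁻ x, ENNReal.ofReal
                (if c / 2 ^ (j + 1) < g x
                  then (((j + 1 : ℕ) : ℝ) * Real.log 2 + 1) *
                    (g x * Real.log (Real.exp 1 + g x / c) ^ (j + 1)) else 0)) :=
          mul_le_mul_right (add_le_add hT1 hT2) _
      _ = 2 * 9 ^ n * ((ENNReal.ofReal lam)⁻¹ * (ENNReal.ofReal c * (C * ∫⁻ x, ENNReal.ofReal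
              (if c / 2 ^ (j + 1) < g x
                then g x / c * Real.log (Real.exp 1 + g x / c) ^ j else 0)))
            + (ENNReal.ofReal lam)⁻¹ * (C * ∫⁻ x, ENNReal.ofReal
                (if c / 2 ^ (j + 1) < g x
                  then (((j + 1 : ℕ) : ℝ) * Real.log 2 + 1) *
                    (g x * Real.log (Real.exp 1 + g x / c) ^ (j + 1)) else 0))) := by
          rw [div_eq_mul_inv, mul_assoc, mul_add]
      _ ≤ 2 * 9 ^ n * (C * (ENNReal.ofReal ((2:ℝ) ^ j) * Jt)
            + C * (ENNReal.ofReal (A2R * 2 ^ (j + 1)) * Jt)) :=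
          mul_le_mul_right (add_le_add hb1 hb2) _
      _ = 2 * 9 ^ n * (C * (ENNReal.ofReal ((2:ℝ) ^ j)
            + ENNReal.ofReal (A2R * 2 ^ (j + 1)))) * Jt := by ring

end Key

/-- weak type `L(log L)^{k-1}` endpoint bound for the `k`-th
iterate of the Hardy–Littlewood maximal operator:
`|{M^k f > λ}| ≲ ∫ (|f|/λ) log^{k-1}(e + |f|/λ)`. -/
theorem statement12 (n k : ℕ) (hk : 1 ≤ k) :
    ∃ C : ℝ≥0∞, C ≠ ⊤ ∧
      ∀ (f : (Fin n → ℝ) → ℝ) (_ : Measurable f) (lam : ℝ) (_ : 0 < lam),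
        volume {x : Fin n → ℝ |
            ENNReal.ofReal lam < (maximal (n := n))^[k] (fun y => ENNReal.ofReal |f y|) x} ≤
          C * ∫⁻ x : Fin n → ℝ,
            ENNReal.ofReal
              ((|f x| / lam) * Real.log (Real.exp 1 + |f x| / lam) ^ (k - 1)) := by
  obtain ⟨C, hC, hCb⟩ := key n k hk
  refine ⟨C, hC, fun f hf lam hlam => ?_⟩
  refine le_trans (hCb (fun y => |f y|) hf.abs (fun x => abs_nonneg _) lam hlam) ?_
  refine mul_le_mul_right (lintegral_mono fun x => ?_) _
  apply ENNReal.ofReal_le_ofReal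
  by_cases h : lam / 2 ^ k < |f x|
  · rw [if_pos h]
  · rw [if_neg h]
    have h1 : 0 ≤ Real.log (Real.exp 1 + |f x| / lam) :=
      le_trans zero_le_one (one_le_log_exp_add (by positivity))
    have h2 : 0 ≤ |f x| / lam := by positivity
    positivity
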